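/- Feasibility invariant of Algorithm STO: assume p_i ≥ 0 and d_max,i ≥ 0 for all i, ŝ(0)_i ≤ s⁺_i for all i ∈ {0,…,l−1}, and ŝ(0)_{l−1} + t_{l−1} ≤ T. Then after each iteration of the outer loop of Algorithm STO (i.e., after each index a has been processed and the start times recomputed), the current pair (ŝ(d), d) is feasible for the service-time LP; in particular d_a ≥ 0 at each update. -/

import Mathlib

/-- Feasibility for the service-time LP: time-window bounds on start times,
bounds on service times, and the chain constraints with the convention `s_l := T`. -/
def Feasible (l : ℕ) (T : ℝ) (t dmax smin smax s d : ℕ → ℝ) : Prop :=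
  (∀ i < l, smin i ≤ s i ∧ s i ≤ smax i) ∧
  (∀ i < l, 0 ≤ d i ∧ d i ≤ dmax i) ∧
  (∀ i < l, s i + d i + t i ≤ (if i + 1 = l then T else s (i + 1)))

/-- The earliest-start schedule: `ŝ(d)_0 := s⁻_0` and
`ŝ(d)_{i+1} := max { ŝ(d)_i + d_i + t_i, s⁻_{i+1} }`. -/
def sHat (t smin d : ℕ → ℝ) : ℕ → ℝ
  | 0 => smin 0
  | i + 1 => max (sHat t smin d i + d i + t i) (smin (i + 1))

/-- One iteration of Algorithm STO: process index `a`, setting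
`d_a := min { d_max,a, min_{j=a+1}^{l} ( s⁺_j - ŝ(d)_a - Σ_{m=a}^{j-1} (d_m + t_m) ) }`,
with the conventions `s⁺_l := T` and `d_a = 0` inside the sum. -/
def stoStep (l : ℕ) (T : ℝ) (t dmax smin smax : ℕ → ℝ) (d : ℕ → ℝ) (a : ℕ) : ℕ → ℝ :=
  if h : a < l then
    Function.update d a (min (dmax a)
      ((Finset.Icc (a + 1) l).inf' (Finset.nonempty_Icc.mpr (by omega))
        fun j => (if j = l then T else smax j) - sHat t smin d a
          - ∑ m ∈ Finset.Ico a j, ((if m = a then 0 else d m) + t m)))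
  else d

/-- Service times produced by Algorithm STO after processing the indices in `order`,
starting from the all-zero service times. -/
def stoD (l : ℕ) (T : ℝ) (t dmax smin smax : ℕ → ℝ) (order : List ℕ) : ℕ → ℝ :=
  order.foldl (stoStep l T t dmax smin smax) fun _ => 0

/-! The earliest-start schedule has the closed form
`ŝ(d)_j = max_{k ≤ j} (s⁻_k + Σ_{k ≤ m < j} (d_m + t_m))`, so `(ŝ(d), d)` is feasible exactly
when `d` respects its bounds and every such path from `k` to `j ≤ l` meets the deadline of `j`
(`s⁺_j`, or `T` when `j = l`). Changing `d_a` only affects the paths through `a`, each of which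
is dominated by `ŝ(d)_a + Σ_{a ≤ m < j} (d_m + t_m)`; the value STO assigns to `d_a` is the largest
one at most `d_max,a` keeping these below their deadlines, and it is nonnegative because the
previous schedule met the same deadlines with `d_a ≥ 0`. -/

open Finset

section EarliestStart

variable (t smin d : ℕ → ℝ)

lemma smin_le_sHat : ∀ i, smin i ≤ sHat t smin d i
  | 0 => le_rfl
  | _ + 1 => le_max_right _ _

lemma sHat_add_le_sHat_succ (i : ℕ) : sHat t smin d i + d i + t i ≤ sHat t smin d (i + 1) :=
  le_max_left _ _

lemma sHat_add_sum_le {k j : ℕ} (hkj : k ≤ j) :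
    sHat t smin d k + ∑ m ∈ Ico k j, (d m + t m) ≤ sHat t smin d j := by
  induction j, hkj using Nat.le_induction with
  | base => simp
  | succ j hkj ih =>
    rw [sum_Ico_succ_top hkj]
    linarith [sHat_add_le_sHat_succ t smin d j]

lemma exists_sHat_eq (j : ℕ) :
    ∃ k ≤ j, sHat t smin d j = smin k + ∑ m ∈ Ico k j, (d m + t m) := by
  induction j with
  | zero => exact ⟨0, le_rfl, by simp [sHat]⟩
  | succ j ih =>
    obtain ⟨k, hkj, hk⟩ := ih
    rcases max_choice (sHat t smin d j + d j + t j) (smin (j + 1)) with h | h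
    · refine ⟨k, by omega, ?_⟩
      rw [sHat, h, sum_Ico_succ_top hkj, hk]
      ring
    · exact ⟨j + 1, le_rfl, by rw [sHat, h]; simp⟩

end EarliestStart

def deadline (l : ℕ) (T : ℝ) (smax : ℕ → ℝ) (j : ℕ) : ℝ := if j = l then T else smax j

section Feasibility

variable {l : ℕ} {T : ℝ} {t dmax smin smax d : ℕ → ℝ}

lemma Feasible.sHat_add_sum_le_deadline (hf : Feasible l T t dmax smin smax (sHat t smin d) d)
    {k j : ℕ} (hkj : k ≤ j) (hjl : j ≤ l) (hkl : k < l) :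
    sHat t smin d k + ∑ m ∈ Ico k j, (d m + t m) ≤ deadline l T smax j := by
  rcases hjl.lt_or_eq with hjl | hjl
  · rw [deadline, if_neg hjl.ne]
    exact (sHat_add_sum_le t smin d hkj).trans (hf.1 j hjl).2
  · obtain ⟨i, rfl⟩ : ∃ i, j = i + 1 := ⟨j - 1, by omega⟩
    have hchain := hf.2.2 i (by omega)
    rw [if_pos hjl] at hchain
    rw [deadline, if_pos hjl, sum_Ico_succ_top (by omega)]
    linarith [sHat_add_sum_le t smin d (show k ≤ i by omega)]

lemma feasible_sHat_of_forall_le_deadline (hd : ∀ i < l, 0 ≤ d i ∧ d i ≤ dmax i)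
    (hpath : ∀ k j, k ≤ j → j ≤ l → k < l →
      smin k + ∑ m ∈ Ico k j, (d m + t m) ≤ deadline l T smax j) :
    Feasible l T t dmax smin smax (sHat t smin d) d := by
  refine ⟨fun i hi => ⟨smin_le_sHat t smin d i, ?_⟩, hd, fun i hi => ?_⟩
  · obtain ⟨k, hki, hk⟩ := exists_sHat_eq t smin d i
    have := hpath k i hki hi.le (by omega)
    rwa [deadline, if_neg hi.ne, ← hk] at this
  · split_ifs with hil
    · obtain ⟨k, hki, hk⟩ := exists_sHat_eq t smin d i
      have := hpath k (i + 1) (by omega) hil.le (by omega)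
      rw [deadline, if_pos hil, sum_Ico_succ_top hki] at this
      linarith
    · exact sHat_add_le_sHat_succ t smin d i

lemma Feasible.update (hf : Feasible l T t dmax smin smax (sHat t smin d) d) {a : ℕ} {v : ℝ}
    (hv : 0 ≤ v ∧ v ≤ dmax a)
    (hpath : ∀ j, a < j → j ≤ l →
      sHat t smin d a + ∑ m ∈ Ico a j, (Function.update d a v m + t m) ≤ deadline l T smax j) :
    Feasible l T t dmax smin smax (sHat t smin (Function.update d a v)) (Function.update d a v) := by
  have hsum : ∀ k j, a ∉ Ico k j →
      ∑ m ∈ Ico k j, (Function.update d a v m + t m) = ∑ m ∈ Ico k j, (d m + t m) := fun k j ha =>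
    sum_congr rfl fun m hm => by rw [Function.update_of_ne (ne_of_mem_of_not_mem hm ha)]
  apply feasible_sHat_of_forall_le_deadline
  · intro i hi
    rcases eq_or_ne i a with rfl | hia
    · simpa using hv
    · simpa [Function.update_of_ne hia] using hf.2.1 i hi
  · intro k j hkj hjl hkl
    have hk := smin_le_sHat t smin d k
    by_cases ha : a ∈ Ico k j
    · rw [mem_Ico] at ha
      rw [← sum_Ico_consecutive _ ha.1 ha.2.le, hsum k a (by simp)]
      linarith [sHat_add_sum_le t smin d ha.1, hpath j ha.2 hjl]
    · rw [hsum k j ha]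
      linarith [hf.sHat_add_sum_le_deadline hkj hjl hkl]

end Feasibility

lemma sum_Ico_eq_add_sum_Ico_succ {d d' t : ℕ → ℝ} {a j : ℕ} (haj : a < j)
    (h : ∀ m, m ≠ a → d' m = d m) :
    ∑ m ∈ Ico a j, (d' m + t m) = d' a + t a + ∑ m ∈ Ico (a + 1) j, (d m + t m) := by
  rw [sum_eq_sum_Ico_succ_bot haj]
  congr 1
  exact sum_congr rfl fun m hm => by rw [h m (by simp at hm; omega)]

section Step

variable {l : ℕ} {T : ℝ} {t dmax smin smax d : ℕ → ℝ} {a : ℕ}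

lemma stoStep_eq_update (ha : a < l) :
    stoStep l T t dmax smin smax d a =
      Function.update d a (stoStep l T t dmax smin smax d a a) := by
  simp [stoStep, ha]

lemma stoStep_apply_self (ha : a < l) :
    stoStep l T t dmax smin smax d a a = min (dmax a)
      ((Icc (a + 1) l).inf' (nonempty_Icc.mpr (by omega)) fun j =>
        deadline l T smax j - sHat t smin d a
          - ∑ m ∈ Ico a j, ((if m = a then 0 else d m) + t m)) := by
  simp [stoStep, ha, deadline]

lemma sHat_add_stoStep_add_sum_le_deadline (ha : a < l) {j : ℕ} (haj : a < j) (hjl : j ≤ l) :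
    sHat t smin d a + (stoStep l T t dmax smin smax d a a + t a +
      ∑ m ∈ Ico (a + 1) j, (d m + t m)) ≤ deadline l T smax j := by
  have hv : stoStep l T t dmax smin smax d a a ≤ _ :=
    (stoStep_apply_self ha).trans_le ((min_le_right _ _).trans (inf'_le _ (mem_Icc.mpr ⟨haj, hjl⟩)))
  rw [sum_Ico_eq_add_sum_Ico_succ haj fun m hm => if_neg hm, if_pos rfl] at hv
  linarith

lemma stoStep_apply_self_nonneg (ha : a < l) (hdmax : 0 ≤ dmax a)
    (hf : Feasible l T t dmax smin smax (sHat t smin d) d) :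
    0 ≤ stoStep l T t dmax smin smax d a a := by
  rw [stoStep_apply_self ha]
  refine le_min hdmax (le_inf' _ _ fun j hj => ?_)
  obtain ⟨haj, hjl⟩ : a < j ∧ j ≤ l := mem_Icc.mp hj
  have hpath := hf.sHat_add_sum_le_deadline haj.le hjl ha
  rw [sum_Ico_eq_add_sum_Ico_succ haj fun _ _ => rfl] at hpath
  rw [sum_Ico_eq_add_sum_Ico_succ haj fun m hm => if_neg hm, if_pos rfl]
  linarith [(hf.2.1 a ha).1]

lemma Feasible.stoStep (hf : Feasible l T t dmax smin smax (sHat t smin d) d)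
    (hdmax : 0 ≤ dmax a) :
    Feasible l T t dmax smin smax (sHat t smin (stoStep l T t dmax smin smax d a))
      (stoStep l T t dmax smin smax d a) := by
  by_cases ha : a < l
  · rw [stoStep_eq_update ha]
    refine hf.update ⟨stoStep_apply_self_nonneg ha hdmax hf, ?_⟩ fun j haj hjl => ?_
    · rw [stoStep_apply_self ha]
      exact min_le_left _ _
    · rw [sum_Ico_eq_add_sum_Ico_succ haj fun m hm => Function.update_of_ne hm _ _,
        Function.update_self]
      exact sHat_add_stoStep_add_sum_le_deadline ha haj hjl
  · simpa [_root_.stoStep, ha] using hf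

end Step

section Algorithm

variable {l : ℕ} {T : ℝ} {t dmax smin smax : ℕ → ℝ}

lemma stoD_append_singleton (pre : List ℕ) (a : ℕ) :
    stoD l T t dmax smin smax (pre ++ [a]) =
      stoStep l T t dmax smin smax (stoD l T t dmax smin smax pre) a := by
  simp [stoD, List.foldl_append]

lemma feasible_sHat_zero (hdmax : ∀ i < l, 0 ≤ dmax i)
    (hwin : ∀ i < l, sHat t smin (fun _ => 0) i ≤ smax i)
    (hT : sHat t smin (fun _ => 0) (l - 1) + t (l - 1) ≤ T) :
    Feasible l T t dmax smin smax (sHat t smin fun _ => 0) fun _ => 0 := by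
  refine ⟨fun i hi => ⟨smin_le_sHat t smin _ i, hwin i hi⟩,
    fun i hi => ⟨le_rfl, hdmax i hi⟩, fun i hi => ?_⟩
  split_ifs with hil
  · obtain rfl : i = l - 1 := by omega
    simpa using hT
  · exact sHat_add_le_sHat_succ t smin _ i

lemma feasible_stoD (hdmax : ∀ i < l, 0 ≤ dmax i)
    (h0 : Feasible l T t dmax smin smax (sHat t smin fun _ => 0) fun _ => 0)
    (pre : List ℕ) (hpre : ∀ x ∈ pre, x < l) :
    Feasible l T t dmax smin smax (sHat t smin (stoD l T t dmax smin smax pre))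
      (stoD l T t dmax smin smax pre) := by
  induction pre using List.reverseRecOn with
  | nil => exact h0
  | append_singleton pre a ih =>
    rw [stoD_append_singleton]
    exact (ih fun x hx => hpre x (by simp [hx])).stoStep (hdmax a (hpre a (by simp)))

end Algorithm

theorem sto_invariant_general
    (l : ℕ) (T : ℝ) (t dmax smin smax : ℕ → ℝ)
    (hdmax : ∀ i < l, 0 ≤ dmax i)
    (hwin : ∀ i < l, sHat t smin (fun _ => 0) i ≤ smax i)
    (hT : sHat t smin (fun _ => 0) (l - 1) + t (l - 1) ≤ T)
    (order : List ℕ) (hperm : order.Perm (List.range l)) :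
    (∀ pre : List ℕ, pre <+: order →
      Feasible l T t dmax smin smax
        (sHat t smin (stoD l T t dmax smin smax pre))
        (stoD l T t dmax smin smax pre)) ∧
    (∀ (pre : List ℕ) (a : ℕ), pre ++ [a] <+: order →
      0 ≤ stoD l T t dmax smin smax (pre ++ [a]) a) := by
  have h0 := feasible_sHat_zero hdmax hwin hT
  have hlt : ∀ pre, pre <+: order → ∀ x ∈ pre, x < l := fun pre hpre x hx =>
    List.mem_range.mp (hperm.subset (hpre.subset hx))
  refine ⟨fun pre hpre => feasible_stoD hdmax h0 pre (hlt pre hpre), fun pre a hpre => ?_⟩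
  have ha : a < l := hlt _ hpre a (by simp)
  rw [stoD_append_singleton]
  exact stoStep_apply_self_nonneg ha (hdmax a ha)
    (feasible_stoD hdmax h0 pre fun x hx => hlt _ hpre x (by simp [hx]))

/-- Feasibility invariant of Algorithm STO: after processing any prefix of the index order,
the current pair `(ŝ(d), d)` is feasible for the service-time LP; in particular the value
assigned to `d_a` at each update is nonnegative. -/
theorem sto_invariant
    (l : ℕ) (hl : 1 ≤ l) (T : ℝ) (p t dmax smin smax : ℕ → ℝ)
    (hp : ∀ i < l, 0 ≤ p i)
    (hdmax : ∀ i < l, 0 ≤ dmax i)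
    (hwin : ∀ i < l, sHat t smin (fun _ => 0) i ≤ smax i)
    (hT : sHat t smin (fun _ => 0) (l - 1) + t (l - 1) ≤ T)
    (order : List ℕ) (hperm : order.Perm (List.range l))
    (hsorted : order.Pairwise fun i j => p j ≤ p i) :
    (∀ pre : List ℕ, pre <+: order →
      Feasible l T t dmax smin smax
        (sHat t smin (stoD l T t dmax smin smax pre))
        (stoD l T t dmax smin smax pre)) ∧
    (∀ (pre : List ℕ) (a : ℕ), pre ++ [a] <+: order →
      0 ≤ stoD l T t dmax smin smax (pre ++ [a]) a) :=
  sto_invariant_general l T t dmax smin smax hdmax hwin hT order hperm
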